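/- For each integer x and each integer t ≥ 1, the following recurrences hold: a₁(x,t+1) = (1/√2)·(a₂(x+1,t) + a₁(x+1,t)) and a₂(x,t+1) = (1/√2)·(a₂(x−1,t) − a₁(x−1,t)). -/

import Mathlib

open scoped BigOperators

/-- The final x-coordinate of a checker path from `(0,0)` encoded by its sequence of moves
(`true` = move `(1,1)`, `false` = move `(-1,1)`). -/
def moveEndpoint {n : ℕ} (d : Fin n → Bool) : ℤ :=
  ∑ k, (if d k then (1 : ℤ) else -1)

/-- The number of turns of a checker path encoded by its sequence of moves. -/
def nturns {n : ℕ} (d : Fin n → Bool) : ℕ :=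
  ((List.ofFn d).zip (List.ofFn d).tail).countP fun p => p.1 != p.2

/-- Checker paths from `(0,0)` to `(x,t)` whose first step is to `(1,1)`,
encoded by their sequences of moves. -/
def cpaths (x t : ℤ) : Finset (Fin t.toNat → Bool) :=
  Finset.univ.filter fun d => moveEndpoint d = x ∧ (List.ofFn d).headI = true

/-- Feynman checkers amplitude `a(x,t) = 2^((1-t)/2) * i * ∑ₛ (-i)^turns(s)`. -/
noncomputable def a (x t : ℤ) : ℂ :=
  (Real.sqrt 2 : ℂ) ^ (1 - t) * Complex.I * ∑ d ∈ cpaths x t, (-Complex.I) ^ nturns d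

/-!
Split the sum according to the last move. Deleting the last move of a path changes its number
of turns by `0` or `1`, which gives a two-term recurrence for the two partial sums. Since the
first move is to the right, the number of turns is even exactly when the last move is to the
right, so the partial sum over paths ending with a right move is real and the other one is purely
imaginary; at time `t` they are `2^((t-1)/2) a₂` and `-i 2^((t-1)/2) a₁`, and the recurrence
becomes the Dirac equation.
-/

open Finset Complex

def listTurns (l : List Bool) : ℕ := (l.zip l.tail).countP fun p => p.1 != p.2

lemma listTurns_cons_cons (b c : Bool) (l : List Bool) :
    listTurns (b :: c :: l) = listTurns (c :: l) + if b = c then 0 else 1 := by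
  simp [listTurns, List.countP_cons]

lemma listTurns_append_singleton :
    ∀ (l : List Bool) (hl : l ≠ []) (b : Bool),
      listTurns (l ++ [b]) = listTurns l + if l.getLast hl = b then 0 else 1
  | [], hl, _ => absurd rfl hl
  | [c], _, b => by cases c <;> cases b <;> rfl
  | d :: c :: l, _, b => by
    rw [List.cons_append, List.cons_append, listTurns_cons_cons, ← List.cons_append,
      listTurns_append_singleton (c :: l) (List.cons_ne_nil c l), listTurns_cons_cons,
      List.getLast_cons_cons]
    ring

lemma nturns_eq_listTurns {n : ℕ} (e : Fin n → Bool) : nturns e = listTurns (List.ofFn e) :=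
  rfl

lemma nturns_snoc {n : ℕ} (e : Fin (n + 1) → Bool) (b : Bool) :
    nturns (Fin.snoc e b : Fin (n + 2) → Bool) =
      nturns e + if e (Fin.last n) = b then 0 else 1 := by
  have hsnoc : List.ofFn (Fin.snoc e b : Fin (n + 2) → Bool) = List.ofFn e ++ [b] := by
    rw [List.ofFn_succ']
    simp [Fin.snoc_castSucc]
  rw [nturns_eq_listTurns, nturns_eq_listTurns, hsnoc,
    listTurns_append_singleton _ (by simp), List.getLast_ofFn_succ]

lemma even_nturns_iff {n : ℕ} (e : Fin (n + 1) → Bool) :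
    Even (nturns e) ↔ e 0 = e (Fin.last n) := by
  induction n with
  | zero => simp [nturns]
  | succ n ih =>
    rw [← Fin.snoc_init_self e, nturns_snoc, Fin.snoc_last]
    have h0 : (Fin.snoc (Fin.init e) (e (Fin.last (n + 1))) : Fin (n + 2) → Bool) 0 =
        Fin.init e 0 := by simp
    have hinit := ih (Fin.init e)
    rw [h0]
    generalize nturns (Fin.init e) = k at hinit ⊢
    generalize Fin.init e 0 = b at hinit ⊢
    generalize Fin.init e (Fin.last n) = c at hinit ⊢
    cases b <;> cases c <;> cases e (Fin.last (n + 1)) <;> simp_all [Nat.even_add_one]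

noncomputable def pathSum (x : ℤ) (n : ℕ) (c : Bool) : ℂ :=
  ∑ e : Fin (n + 1) → Bool with moveEndpoint e = x ∧ e 0 = true ∧ e (Fin.last n) = c,
    (-I) ^ nturns e

lemma sum_cpaths_eq_pathSum_add (x : ℤ) (n : ℕ) :
    ∑ d ∈ cpaths x (n + 1), (-I) ^ nturns d = pathSum x n true + pathSum x n false := by
  have hhead : ∀ e : Fin (n + 1) → Bool, (List.ofFn e).headI = e 0 := fun e => by
    rw [List.ofFn_succ]; rfl
  simp only [cpaths, pathSum, hhead, sum_filter, ← sum_add_distrib]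
  refine sum_congr rfl fun e _ => ?_
  cases e (Fin.last n) <;> simp

lemma im_neg_one_pow (m : ℕ) : ((-1 : ℂ) ^ m).im = 0 := by
  exact_mod_cast ofReal_im ((-1 : ℝ) ^ m)

lemma pathSum_true_im (x : ℤ) (n : ℕ) : (pathSum x n true).im = 0 := by
  rw [pathSum, im_sum]
  refine sum_eq_zero fun e he => ?_
  obtain ⟨-, h0, hlast⟩ := (mem_filter.mp he).2
  obtain ⟨m, hm⟩ := (even_nturns_iff e).mpr (h0.trans hlast.symm)
  rw [hm, ← two_mul, pow_mul]
  simpa using im_neg_one_pow m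

lemma pathSum_false_re (x : ℤ) (n : ℕ) : (pathSum x n false).re = 0 := by
  rw [pathSum, re_sum]
  refine sum_eq_zero fun e he => ?_
  obtain ⟨-, h0, hlast⟩ := (mem_filter.mp he).2
  have hodd : ¬Even (nturns e) := by simp [even_nturns_iff, h0, hlast]
  obtain ⟨m, hm⟩ := Nat.not_even_iff_odd.mp hodd
  rw [hm, pow_succ, pow_mul]
  simp [im_neg_one_pow]

lemma moveEndpoint_snoc {n : ℕ} (e : Fin n → Bool) (b : Bool) :
    moveEndpoint (Fin.snoc e b : Fin (n + 1) → Bool) = moveEndpoint e + if b then 1 else -1 := by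
  simp [moveEndpoint, Fin.sum_univ_castSucc]

lemma pathSum_succ (x : ℤ) (n : ℕ) (c : Bool) :
    pathSum x (n + 1) c =
      pathSum (x - if c then 1 else -1) n c + -I * pathSum (x - if c then 1 else -1) n (!c) := by
  rw [pathSum, sum_filter, ← (Fin.snocEquiv fun _ => Bool).sum_comp, Fintype.sum_prod_type,
    Fintype.sum_eq_single c fun b hb => by simp [hb]]
  simp only [pathSum, sum_filter, mul_sum, ← sum_add_distrib]
  refine sum_congr rfl fun e _ => ?_
  have hsnoc : (Fin.snocEquiv fun _ => Bool) (c, e) = Fin.snoc e c := rfl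
  have hzero : (Fin.snoc e c : Fin (n + 2) → Bool) 0 = e 0 := Fin.snoc_castSucc (i := 0) ..
  simp only [hsnoc, hzero, moveEndpoint_snoc, nturns_snoc, Fin.snoc_last, and_true,
    ← eq_sub_iff_add_eq, ← and_assoc]
  by_cases hP : (moveEndpoint e = x - if c then 1 else -1) ∧ e 0 = true
  · cases c <;> cases e (Fin.last n) <;> simp [hP, pow_succ, mul_comm]
  · simp [hP]

lemma a_natCast_add_one (x : ℤ) (n : ℕ) :
    a x (n + 1) = ((√2 ^ n)⁻¹ : ℝ) * I * (pathSum x n true + pathSum x n false) := by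
  rw [a, sum_cpaths_eq_pathSum_add, show (1 : ℤ) - (n + 1) = -n by ring, zpow_neg,
    zpow_natCast]
  push_cast
  rfl

lemma re_a_natCast_add_one (x : ℤ) (n : ℕ) :
    (a x (n + 1)).re = -(pathSum x n false).im / √2 ^ n := by
  rw [a_natCast_add_one, mul_assoc, re_ofReal_mul, I_mul_re, add_im, pathSum_true_im]
  ring

lemma im_a_natCast_add_one (x : ℤ) (n : ℕ) :
    (a x (n + 1)).im = (pathSum x n true).re / √2 ^ n := by
  rw [a_natCast_add_one, mul_assoc, im_ofReal_mul, I_mul_im, add_re, pathSum_false_re]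
  ring

/-- Dirac equation for the basic model. -/
theorem dirac_equation (x t : ℤ) (ht : 1 ≤ t) :
    (a x (t + 1)).re = (1 / Real.sqrt 2) * ((a (x + 1) t).im + (a (x + 1) t).re) ∧
    (a x (t + 1)).im = (1 / Real.sqrt 2) * ((a (x - 1) t).im - (a (x - 1) t).re) := by
  obtain ⟨n, rfl⟩ : ∃ n : ℕ, t = n + 1 := ⟨(t - 1).toNat, by omega⟩
  rw [show (n : ℤ) + 1 + 1 = (n + 1 : ℕ) + 1 by push_cast; ring]
  simp only [re_a_natCast_add_one, im_a_natCast_add_one, pathSum_succ, if_true, Bool.not_true,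
    Bool.false_eq_true, if_false, Bool.not_false, sub_neg_eq_add, add_re, add_im, mul_re, mul_im,
    neg_re, neg_im, I_re, I_im, pathSum_true_im, pathSum_false_re]
  constructor <;> field_simp <;> ring
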